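/- Fix λ > 0 and γ > 1, and define the SCAD penalty g on [0,∞) by g(θ) = λθ if θ ≤ λ; g(θ) = (−θ² + 2γλθ − λ²)/(2(γ−1)) if λ < θ ≤ γλ; g(θ) = λ²(γ+1)/2 if θ > γλ. Define w(θ) = λ if θ ≤ λ; w(θ) = (γλ − θ)/(γ−1) if λ < θ ≤ γλ; w(θ) = 0 if θ > γλ. Then g is continuous, monotonically increasing, and concave on [0,∞), and for every θ ≥ 0, w(θ) is a supergradient of g at θ relative to [0,∞). -/

import Mathlib

/-!
On `[λ, γλ]` the SCAD penalty is the concave quadratic `q(θ) = (-θ² + 2γλθ - λ²) / (2(γ - 1))`,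
whose tangent at `λ` is `θ ↦ λθ` and whose tangent at `γλ` is the constant `λ²(γ + 1) / 2`.
Hence the penalty lies below every tangent of `q` at a point of `[λ, γλ]`, and
`g(θ) + w(θ)(y - θ)` is exactly the tangent at `θ` clamped to `[λ, γλ]`. This supergradient
inequality yields concavity, and monotonicity because `w ≥ 0`.
-/

theorem concaveOn_of_supergradient {E : Type*} [AddCommGroup E] [Module ℝ E] {s : Set E}
    {f : E → ℝ} (v : E → Module.Dual ℝ E) (hs : Convex ℝ s)
    (h : ∀ x ∈ s, ∀ y ∈ s, f y ≤ f x + v x (y - x)) : ConcaveOn ℝ s f := by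
  refine ⟨hs, fun x hx y hy a b ha hb hab => ?_⟩
  set z := a • x + b • y
  have hz : z ∈ s := hs hx hy ha hb hab
  have hzero : a * v z (x - z) + b * v z (y - z) = 0 := by
    rw [← smul_eq_mul, ← smul_eq_mul, ← map_smul, ← map_smul, ← map_add, smul_sub, smul_sub,
      sub_add_sub_comm, ← add_smul, hab, one_smul, sub_self, map_zero]
  have hfz : f z = a * f z + b * f z := by rw [← add_mul, hab, one_mul]
  rw [smul_eq_mul, smul_eq_mul, hfz]
  linarith [mul_le_mul_of_nonneg_left (h z hz x hx) ha, mul_le_mul_of_nonneg_left (h z hz y hy) hb]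

theorem monotoneOn_of_supergradient_nonneg {s : Set ℝ} {f v : ℝ → ℝ}
    (h : ∀ x ∈ s, ∀ y ∈ s, f y ≤ f x + v x * (y - x)) (hv : ∀ x ∈ s, 0 ≤ v x) :
    MonotoneOn f s := fun x hx y hy hxy => by
  nlinarith [h y hy x hx, mul_nonpos_of_nonneg_of_nonpos (hv y hy) (sub_nonpos.mpr hxy)]

namespace SCAD

variable (lam γ : ℝ)

noncomputable def quad (θ : ℝ) : ℝ := (-θ ^ 2 + 2 * γ * lam * θ - lam ^ 2) / (2 * (γ - 1))

noncomputable def quadSlope (t : ℝ) : ℝ := (γ * lam - t) / (γ - 1)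

noncomputable def tangent (t y : ℝ) : ℝ := quad lam γ t + quadSlope lam γ t * (y - t)

noncomputable def penalty (θ : ℝ) : ℝ :=
  if θ ≤ lam then lam * θ
  else if θ ≤ γ * lam then quad lam γ θ
  else lam ^ 2 * (γ + 1) / 2

noncomputable def slope (θ : ℝ) : ℝ :=
  if θ ≤ lam then lam
  else if θ ≤ γ * lam then quadSlope lam γ θ
  else 0

variable {lam γ}

theorem penalty_le_tangent (hγ : 1 < γ) {t : ℝ} (hlt : lam ≤ t) (htg : t ≤ γ * lam) (y : ℝ) :
    penalty lam γ y ≤ tangent lam γ t y := by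
  have hγ₀ : γ - 1 ≠ 0 := by linarith
  have hγ₂ : 0 ≤ 2 * (γ - 1) := by linarith
  unfold penalty
  rw [← sub_nonneg]
  split_ifs with hyl hyg
  · rw [show tangent lam γ t y - lam * y = (t - lam) * (t + lam - 2 * y) / (2 * (γ - 1)) by
      unfold tangent quad quadSlope; field_simp; ring]
    exact div_nonneg (mul_nonneg (by linarith) (by linarith)) hγ₂
  · rw [show tangent lam γ t y - quad lam γ y = (y - t) ^ 2 / (2 * (γ - 1)) by
      unfold tangent quad quadSlope; field_simp; ring]
    exact div_nonneg (sq_nonneg _) hγ₂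
  · rw [show tangent lam γ t y - lam ^ 2 * (γ + 1) / 2
        = (γ * lam - t) * (2 * y - t - γ * lam) / (2 * (γ - 1)) by
      unfold tangent quad quadSlope; field_simp; ring]
    exact div_nonneg (mul_nonneg (by linarith) (by linarith)) hγ₂

theorem penalty_le_add_slope_mul (hlam : 0 ≤ lam) (hγ : 1 < γ) (θ y : ℝ) :
    penalty lam γ y ≤ penalty lam γ θ + slope lam γ θ * (y - θ) := by
  have hlg : lam ≤ γ * lam := by nlinarith
  have hγ₀ : γ - 1 ≠ 0 := by linarith
  rcases le_or_gt θ lam with hθl | hθl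
  · calc penalty lam γ y ≤ tangent lam γ lam y := penalty_le_tangent hγ le_rfl hlg y
      _ = _ := by
        simp only [penalty, slope, if_pos hθl, tangent, quad, quadSlope]; field_simp; ring
  rcases le_or_gt θ (γ * lam) with hθg | hθg
  · calc penalty lam γ y ≤ tangent lam γ θ y := penalty_le_tangent hγ hθl.le hθg y
      _ = _ := by simp only [penalty, slope, if_neg hθl.not_ge, if_pos hθg, tangent]
  · calc penalty lam γ y ≤ tangent lam γ (γ * lam) y := penalty_le_tangent hγ hlg le_rfl y
      _ = _ := by
        simp only [penalty, slope, if_neg hθl.not_ge, if_neg hθg.not_ge, tangent, quad,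
          quadSlope]
        field_simp; ring

theorem slope_nonneg (hlam : 0 ≤ lam) (hγ : 1 < γ) (θ : ℝ) : 0 ≤ slope lam γ θ := by
  unfold slope quadSlope
  split_ifs with hθl hθg
  · exact hlam
  · exact div_nonneg (by linarith) (by linarith)
  · exact le_rfl

theorem continuous_penalty (hlam : 0 ≤ lam) (hγ : 1 < γ) : Continuous (penalty lam γ) := by
  have hlg : lam ≤ γ * lam := by nlinarith
  have hγ₀ : γ - 1 ≠ 0 := by linarith
  have hquad : Continuous (quad lam γ) := by unfold quad; fun_prop
  refine Continuous.if_le (by fun_prop) ?_ continuous_id continuous_const fun θ hθ => ?_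
  · refine hquad.if_le continuous_const continuous_id continuous_const fun θ hθ => ?_
    rw [hθ]; unfold quad; field_simp; ring
  · rw [hθ, if_pos hlg]; unfold quad; field_simp; ring

end SCAD

/-- SCAD penalty: continuity, monotonicity, concavity on `[0, ∞)` and its supergradient. -/
theorem scad_penalty
    (lam γ : ℝ) (hlam : 0 < lam) (hγ : 1 < γ)
    (g w : ℝ → ℝ)
    (hg : ∀ θ : ℝ, g θ =
      if θ ≤ lam then lam * θ
      else if θ ≤ γ * lam then (-θ ^ 2 + 2 * γ * lam * θ - lam ^ 2) / (2 * (γ - 1))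
      else lam ^ 2 * (γ + 1) / 2)
    (hw : ∀ θ : ℝ, w θ =
      if θ ≤ lam then lam
      else if θ ≤ γ * lam then (γ * lam - θ) / (γ - 1)
      else 0) :
    ContinuousOn g (Set.Ici (0 : ℝ)) ∧
    MonotoneOn g (Set.Ici (0 : ℝ)) ∧
    ConcaveOn ℝ (Set.Ici (0 : ℝ)) g ∧
    ∀ θ : ℝ, 0 ≤ θ → ∀ y : ℝ, 0 ≤ y → g θ + w θ * (y - θ) ≥ g y := by
  obtain rfl : g = SCAD.penalty lam γ := funext hg
  obtain rfl : w = SCAD.slope lam γ := funext hw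
  have hsup := SCAD.penalty_le_add_slope_mul hlam.le hγ
  refine ⟨(SCAD.continuous_penalty hlam.le hγ).continuousOn,
    monotoneOn_of_supergradient_nonneg (fun x _ y _ => hsup x y)
      (fun x _ => SCAD.slope_nonneg hlam.le hγ x),
    concaveOn_of_supergradient (fun x => SCAD.slope lam γ x • LinearMap.id) (convex_Ici 0)
      (fun x _ y _ => by simpa using hsup x y),
    fun θ _ y _ => hsup θ y⟩
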